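/- Let Θ : ℚ[U₁, U₂, U₃, U₄, U₅] → ℚ[v₁, v₂, v₃, v₄] be the ℚ-algebra homomorphism determined by U₁ ↦ v₁ + v₂, U₂ ↦ v₃ + v₄, U₃ ↦ v₁² + v₂², U₄ ↦ v₃² + v₄², and U₅ ↦ v₁v₄ + v₂v₃. Then the kernel of Θ is the principal ideal generated by the polynomial 2U₃U₄ + 2U₁U₂U₅ − U₂²U₃ − U₁²U₄ − 2U₅². -/

import Mathlib

/-!
Modulo the generator `f`, whose `U₅²`-coefficient `-2` is a unit, every polynomial is congruent
to `A + B U₅` with `A, B` polynomials in `U₁, …, U₄`. If `Θ` kills it, then `φ A + φ B w = 0`,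
where `φ` is `Θ` on `U₁, …, U₄` and `w = v₁v₄ + v₂v₃`. The swap `v₁ ↔ v₂` fixes `φ` and sends `w`
to `v₂v₄ + v₁v₃`, so `φ B · (v₁ - v₂)(v₄ - v₃) = 0`. Finally `φ` is injective: over an algebraic
closure of the fraction field, `v₁, v₂ = (p₁ ± √(2p₂ - p₁²)) / 2` (and likewise for `v₃, v₄`)
inverts it. Hence `B = 0`, then `A = 0`, and `f` divides the original polynomial.
-/

open MvPolynomial

section QuadraticRelation

variable {R S : Type*} [CommRing R] [CommRing S] {n : ℕ}

theorem exists_eq_add_mul_X_last_of_sq_X_last (π : MvPolynomial (Fin (n + 1)) R →+* S)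
    (a b : MvPolynomial (Fin n) R)
    (h : π (X (Fin.last n)) ^ 2 =
      π (rename Fin.castSucc a) + π (rename Fin.castSucc b) * π (X (Fin.last n)))
    (P : MvPolynomial (Fin (n + 1)) R) :
    ∃ A B : MvPolynomial (Fin n) R,
      π P = π (rename Fin.castSucc A) + π (rename Fin.castSucc B) * π (X (Fin.last n)) := by
  induction P using MvPolynomial.induction_on with
  | C r => exact ⟨C r, 0, by simp⟩
  | add p q hp hq =>
    obtain ⟨A, B, hp⟩ := hp
    obtain ⟨A', B', hq⟩ := hq
    exact ⟨A + A', B + B', by rw [map_add, hp, hq]; simp only [map_add]; ring⟩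
  | mul_X p i hp =>
    obtain ⟨A, B, hp⟩ := hp
    induction i using Fin.lastCases with
    | last =>
      refine ⟨B * a, A + B * b, ?_⟩
      rw [map_mul, hp]
      simp only [map_add, map_mul]
      linear_combination π (rename Fin.castSucc B) * h
    | cast j =>
      refine ⟨A * X j, B * X j, ?_⟩
      rw [map_mul, hp]
      simp only [map_mul, rename_X]
      ring

end QuadraticRelation

section PowerSumPairs

variable (K : Type*) [Field K]

noncomputable def powerSumPairs : MvPolynomial (Fin 4) K →ₐ[K] MvPolynomial (Fin 4) K :=
  aeval ![X 0 + X 1, X 2 + X 3, X 0 ^ 2 + X 1 ^ 2, X 2 ^ 2 + X 3 ^ 2]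

variable {K}

theorem aeval_comp_powerSumPairs {L : Type*} [Field L] [Algebra K L] (h2 : (2 : L) ≠ 0)
    (t : Fin 4 → L) {r s : L} (hr : r ^ 2 = 2 * t 2 - t 0 ^ 2) (hs : s ^ 2 = 2 * t 3 - t 1 ^ 2) :
    (aeval ![(t 0 + r) / 2, (t 0 - r) / 2, (t 1 + s) / 2, (t 1 - s) / 2]).comp
      (powerSumPairs K) = aeval t := by
  refine algHom_ext fun i => ?_
  fin_cases i <;>
    simp only [powerSumPairs, AlgHom.comp_apply, aeval_X, map_add, map_pow, Matrix.cons_val,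
      Matrix.cons_val_zero, Matrix.cons_val_one, Fin.isValue, Fin.reduceFinMk, Fin.zero_eta,
      Fin.mk_one] <;>
    field_simp
  · ring
  · ring
  · linear_combination 2 * hr
  · linear_combination 2 * hs

theorem powerSumPairs_injective (h2 : (2 : K) ≠ 0) : Function.Injective (powerSumPairs K) := by
  let L := AlgebraicClosure (FractionRing (MvPolynomial (Fin 4) K))
  have hL : Function.Injective (algebraMap (MvPolynomial (Fin 4) K) L) := by
    rw [IsScalarTower.algebraMap_eq _ (FractionRing (MvPolynomial (Fin 4) K)) L]
    exact (algebraMap (FractionRing (MvPolynomial (Fin 4) K)) L).injective.comp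
      (IsFractionRing.injective _ _)
  have h2L : (2 : L) ≠ 0 := by
    simpa only [map_ofNat] using (map_ne_zero (algebraMap K L)).mpr h2
  let t i := algebraMap (MvPolynomial (Fin 4) K) L (X i)
  have ht : aeval t = IsScalarTower.toAlgHom K (MvPolynomial (Fin 4) K) L :=
    algHom_ext fun i => by simp [t]
  obtain ⟨r, hr⟩ := IsAlgClosed.exists_pow_nat_eq (2 * t 2 - t 0 ^ 2) two_pos
  obtain ⟨s, hs⟩ := IsAlgClosed.exists_pow_nat_eq (2 * t 3 - t 1 ^ 2) two_pos
  refine Function.Injective.of_comp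
    (f := aeval ![(t 0 + r) / 2, (t 0 - r) / 2, (t 1 + s) / 2, (t 1 - s) / 2]) ?_
  rw [← AlgHom.coe_comp, aeval_comp_powerSumPairs h2L t hr hs, ht]
  exact hL

theorem rename_swap_comp_powerSumPairs :
    (rename (Equiv.swap (0 : Fin 4) 1)).comp (powerSumPairs K) = powerSumPairs K :=
  algHom_ext fun i => by
    fin_cases i <;>
      simp only [powerSumPairs, AlgHom.comp_apply, aeval_X, map_add, map_pow, rename_X,
        Matrix.cons_val, Matrix.cons_val_zero, Matrix.cons_val_one, Fin.isValue, Fin.reduceFinMk,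
        Fin.zero_eta, Fin.mk_one, Equiv.swap_apply_left, Equiv.swap_apply_right,
        Equiv.swap_apply_of_ne_of_ne, ne_eq, Fin.reduceEq, not_false_eq_true] <;>
      ring

theorem eq_zero_of_powerSumPairs_add_mul_eq_zero (h2 : (2 : K) ≠ 0)
    {A B : MvPolynomial (Fin 4) K}
    (h : powerSumPairs K A + powerSumPairs K B * (X 0 * X 3 + X 1 * X 2) = 0) :
    A = 0 ∧ B = 0 := by
  have h' : powerSumPairs K A + powerSumPairs K B * (X 1 * X 3 + X 0 * X 2) = 0 := by
    have := congrArg (rename (Equiv.swap (0 : Fin 4) 1)) h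
    simp only [map_add, map_mul, map_zero, rename_X, ← AlgHom.comp_apply,
      rename_swap_comp_powerSumPairs] at this
    simpa [Equiv.swap_apply_of_ne_of_ne] using this
  have hd : (X 0 - X 1) * (X 3 - X 2) ≠ (0 : MvPolynomial (Fin 4) K) := fun h0 => by
    simpa using congrArg (eval ![1, 0, 0, 1]) h0
  have hB : powerSumPairs K B = 0 :=
    (mul_eq_zero.mp (by linear_combination h - h' :
      powerSumPairs K B * ((X 0 - X 1) * (X 3 - X 2)) = 0)).resolve_right hd
  rw [hB, zero_mul, add_zero] at h
  exact ⟨powerSumPairs_injective h2 (h.trans (map_zero _).symm),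
    powerSumPairs_injective h2 (hB.trans (map_zero _).symm)⟩

end PowerSumPairs

section Theta

variable (K : Type*) [Field K]

noncomputable def theta : MvPolynomial (Fin 5) K →ₐ[K] MvPolynomial (Fin 4) K :=
  aeval ![X 0 + X 1, X 2 + X 3, X 0 ^ 2 + X 1 ^ 2, X 2 ^ 2 + X 3 ^ 2, X 0 * X 3 + X 1 * X 2]

noncomputable def thetaKerGen : MvPolynomial (Fin 5) K :=
  2 * X 2 * X 3 + 2 * X 0 * X 1 * X 4 - X 1 ^ 2 * X 2 - X 0 ^ 2 * X 3 - 2 * X 4 ^ 2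

variable {K}

theorem theta_comp_rename_castSucc :
    (theta K).comp (rename Fin.castSucc) = powerSumPairs K :=
  algHom_ext fun i => by fin_cases i <;> simp [theta, powerSumPairs]

theorem theta_X_last : theta K (X (Fin.last 4)) = X 0 * X 3 + X 1 * X 2 := by
  simp [theta]

theorem theta_thetaKerGen : theta K (thetaKerGen K) = 0 := by
  simp only [theta, thetaKerGen, map_sub, map_add, map_mul, map_pow, map_ofNat, aeval_X,
    Matrix.cons_val, Matrix.cons_val_zero, Matrix.cons_val_one, Fin.isValue]
  ring

theorem mk_X_last_sq (h2 : (2 : K) ≠ 0) :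
    Ideal.Quotient.mk (Ideal.span {thetaKerGen K}) (X (Fin.last 4)) ^ 2 =
      Ideal.Quotient.mk _ (rename Fin.castSucc
        (C 2⁻¹ * (2 * X 2 * X 3 - X 1 ^ 2 * X 2 - X 0 ^ 2 * X 3))) +
      Ideal.Quotient.mk _ (rename Fin.castSucc (X 0 * X 1)) *
        Ideal.Quotient.mk _ (X (Fin.last 4)) := by
  rw [← map_pow, ← map_mul, ← map_add, Ideal.Quotient.eq, Ideal.mem_span_singleton']
  refine ⟨C (-2⁻¹), ?_⟩
  have hC : (C 2⁻¹ : MvPolynomial (Fin 5) K) * 2 = 1 := by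
    rw [← map_ofNat C 2, ← C_mul, inv_mul_cancel₀ h2, C_1]
  simp only [thetaKerGen, map_mul, map_sub, map_pow, map_ofNat, rename_X, rename_C, map_neg,
    Fin.isValue, Fin.reduceCastSucc, Fin.castSucc_zero, Fin.reduceLast]
  linear_combination (X 4 ^ 2 - X 0 * X 1 * X 4) * hC

theorem ker_theta (h2 : (2 : K) ≠ 0) :
    RingHom.ker (theta K).toRingHom = Ideal.span {thetaKerGen K} := by
  have hle : Ideal.span {thetaKerGen K} ≤ RingHom.ker (theta K).toRingHom := by
    rw [Ideal.span_le, Set.singleton_subset_iff]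
    exact theta_thetaKerGen
  refine le_antisymm (fun P hP => ?_) hle
  obtain ⟨A, B, hAB⟩ := exists_eq_add_mul_X_last_of_sq_X_last _ _ _ (mk_X_last_sq h2) P
  rw [← map_mul, ← map_add, Ideal.Quotient.eq] at hAB
  have h : theta K (P - (rename Fin.castSucc A + rename Fin.castSucc B * X (Fin.last 4))) = 0 :=
    hle hAB
  have hP : theta K P = 0 := hP
  rw [map_sub, hP, zero_sub, neg_eq_zero, map_add, map_mul, ← AlgHom.comp_apply,
    ← AlgHom.comp_apply, theta_comp_rename_castSucc, theta_X_last] at h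
  obtain ⟨rfl, rfl⟩ := eq_zero_of_powerSumPairs_add_mul_eq_zero h2 h
  simpa using hAB

end Theta

theorem kernel_of_Theta
    (Θ : MvPolynomial (Fin 5) ℚ →ₐ[ℚ] MvPolynomial (Fin 4) ℚ)
    (hΘ : Θ = aeval ![(X 0 + X 1 : MvPolynomial (Fin 4) ℚ), X 2 + X 3,
        X 0 ^ 2 + X 1 ^ 2, X 2 ^ 2 + X 3 ^ 2, X 0 * X 3 + X 1 * X 2]) :
    RingHom.ker Θ.toRingHom = Ideal.span
      {2 * X 2 * X 3 + 2 * X 0 * X 1 * X 4 - X 1 ^ 2 * X 2 - X 0 ^ 2 * X 3 -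
        2 * X 4 ^ 2} := by
  subst hΘ
  exact ker_theta two_ne_zero
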